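/- (Proposition: summed second-moment bound for AdaLVR with SAGA estimator.) In the AdaLVR-SAGA setup, it holds that E[ ∑_{t=1}^T ‖g^(t)‖² ] ≤ 8L ∑_{t=1}^T E[ f(x^(t)) − f(x*) ] + 4L n ( f(x^(1)) − f(x*) ). -/

import Mathlib

/-- State of the AdaLVR-SAGA algorithm after `t` steps, driven by the index sequence `idx`
(where the index used at step `t ≥ 1` is `idx t`).  The state at time `t` is the triple
`(x^{(t+1)}, ỹ^{(t)}, G_t)` where `G_t = ∑_{s=1}^t ‖g^{(s)}‖²` (so `A_t = √G_t`),
with initial state `(x^{(1)}, ỹ^{(0)}, 0)`. -/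
noncomputable def adaLVRstate (n d : ℕ) (f : Fin n → EuclideanSpace ℝ (Fin d) → ℝ)
    (proj : EuclideanSpace ℝ (Fin d) → EuclideanSpace ℝ (Fin d))
    (η : ℝ) (x1 : EuclideanSpace ℝ (Fin d)) (idx : ℕ → Fin n) :
    ℕ → EuclideanSpace ℝ (Fin d) × (Fin n → EuclideanSpace ℝ (Fin d)) × ℝ
  | 0 => (x1, fun _ => x1, 0)
  | (t + 1) =>
      let s := adaLVRstate n d f proj η x1 idx t
      let i := idx (t + 1)
      let g := gradient (f i) s.1 - gradient (f i) (s.2.1 i)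
        + (n : ℝ)⁻¹ • ∑ j, gradient (f j) (s.2.1 j)
      let G := s.2.2 + ‖g‖ ^ 2
      (proj (s.1 - (η / Real.sqrt G) • g), Function.update s.2.1 i s.1, G)

/-- The iterate `x^{(t)}` of AdaLVR-SAGA, for `t ≥ 1`. -/
noncomputable def adaLVRx (n d : ℕ) (f : Fin n → EuclideanSpace ℝ (Fin d) → ℝ)
    (proj : EuclideanSpace ℝ (Fin d) → EuclideanSpace ℝ (Fin d))
    (η : ℝ) (x1 : EuclideanSpace ℝ (Fin d)) (idx : ℕ → Fin n) (t : ℕ) :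
    EuclideanSpace ℝ (Fin d) :=
  (adaLVRstate n d f proj η x1 idx (t - 1)).1

/-- The SAGA gradient estimator `g^{(t)}` of AdaLVR-SAGA, for `t ≥ 1`. -/
noncomputable def adaLVRg (n d : ℕ) (f : Fin n → EuclideanSpace ℝ (Fin d) → ℝ)
    (proj : EuclideanSpace ℝ (Fin d) → EuclideanSpace ℝ (Fin d))
    (η : ℝ) (x1 : EuclideanSpace ℝ (Fin d)) (idx : ℕ → Fin n) (t : ℕ) :
    EuclideanSpace ℝ (Fin d) :=
  let s := adaLVRstate n d f proj η x1 idx (t - 1)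
  let i := idx t
  gradient (f i) s.1 - gradient (f i) (s.2.1 i)
    + (n : ℝ)⁻¹ • ∑ j, gradient (f j) (s.2.1 j)

/-- Extension of a finite index tuple `ω : Fin T → Fin n` to `ℕ`, so that the index used at
step `t ∈ {1, …, T}` is `ω (t - 1)`. -/
def extIdx {n : ℕ} (T : ℕ) (hT : 0 < T) (ω : Fin T → Fin n) : ℕ → Fin n :=
  fun t => ω ⟨(t - 1) % T, Nat.mod_lt _ hT⟩

/-!
Since `x⋆` minimises `F`, `∑ⱼ ∇fⱼ(x⋆) = 0`, and summing the co-coercivity inequalities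
`‖∇fᵢ x - ∇fᵢ x⋆‖² ≤ 2L (fᵢ x - fᵢ x⋆ - ⟪∇fᵢ x⋆, x - x⋆⟫)` gives
`∑ᵢ ‖∇fᵢ x - ∇fᵢ x⋆‖² ≤ 2Ln (F x - F x⋆)`. Let `Mₜ = ∑ⱼ ‖∇fⱼ(ỹ⁽ᵗ⁾ⱼ) - ∇fⱼ(x⋆)‖²`.
As `x⁽ᵗ⁾` and `ỹ⁽ᵗ⁻¹⁾` do not depend on `i(t)`, the expectation over `i(t)` is an average over
`i`. Writing `g⁽ᵗ⁾` as `∇fᵢ x⁽ᵗ⁾ - ∇fᵢ x⋆` minus the centred memory error gives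
`E‖g⁽ᵗ⁾‖² ≤ 4L E[F x⁽ᵗ⁾ - F x⋆] + (2/n) E Mₜ₋₁`, and the memory update gives
`E Mₜ ≤ (1 - 1/n) E Mₜ₋₁ + 2L E[F x⁽ᵗ⁾ - F x⋆]`. Summing the latter,
`∑ₜ E Mₜ₋₁ ≤ n M₀ + 2Ln ∑ₜ E[F x⁽ᵗ⁾ - F x⋆]`, and `M₀ ≤ 2Ln (F x⁽¹⁾ - F x⋆)`.
-/

open RealInnerProductSpace Function

section SmoothConvex

open Set

variable {E : Type*} [NormedAddCommGroup E] [InnerProductSpace ℝ E] [CompleteSpace E]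
  {f : E → ℝ}

theorem Differentiable.hasDerivAt_comp_add_smul (hf : Differentiable ℝ f) (p v : E) (τ : ℝ) :
    HasDerivAt (fun s : ℝ => f (p + s • v)) ⟪gradient f (p + τ • v), v⟫ τ := by
  have hline : HasDerivAt (fun s : ℝ => p + s • v) v τ := by
    simpa using ((hasDerivAt_id τ).smul_const v).const_add p
  simpa [InnerProductSpace.toDual_apply_apply, Function.comp_def] using
    (hf _).hasGradientAt.hasFDerivAt.comp_hasDerivAt τ hline

theorem ConvexOn.add_inner_gradient_le (hconv : ConvexOn ℝ univ f) (hf : Differentiable ℝ f)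
    (x y : E) : f y + ⟪gradient f y, x - y⟫ ≤ f x := by
  have hline : ConvexOn ℝ univ (fun s : ℝ => f (y + s • (x - y))) := by
    simpa [comp_def, AffineMap.lineMap_apply, add_comm] using
      hconv.comp_affineMap (AffineMap.lineMap y x)
  have hderiv : HasDerivAt (fun s : ℝ => f (y + s • (x - y))) ⟪gradient f y, x - y⟫ 0 := by
    simpa using hf.hasDerivAt_comp_add_smul y (x - y) 0
  have := hline.le_slope_of_hasDerivAt (mem_univ 0) (mem_univ 1) one_pos hderiv
  simp only [slope_def_field, one_smul, zero_smul, add_zero, add_sub_cancel] at this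
  linarith

theorem le_add_inner_gradient_add_sq_of_lipschitz (hf : Differentiable ℝ f) {L : ℝ}
    (hsm : ∀ a b, ‖gradient f a - gradient f b‖ ≤ L * ‖a - b‖) (x x' : E) :
    f x' ≤ f x + ⟪gradient f x, x' - x⟫ + L / 2 * ‖x' - x‖ ^ 2 := by
  set v := x' - x
  set ψ : ℝ → ℝ := fun s => f (x + s • v) - s * ⟪gradient f x, v⟫ - L / 2 * s ^ 2 * ‖v‖ ^ 2
  have hψ : ∀ s, HasDerivAt ψ
      (⟪gradient f (x + s • v) - gradient f x, v⟫ - L * s * ‖v‖ ^ 2) s := by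
    intro s
    refine (((hf.hasDerivAt_comp_add_smul x v s).sub
      ((hasDerivAt_id s).mul_const ⟪gradient f x, v⟫)).sub
      (((hasDerivAt_pow 2 s).const_mul (L / 2)).mul_const (‖v‖ ^ 2))).congr_deriv ?_
    simp only [inner_sub_left]
    ring
  have hanti : AntitoneOn ψ (Icc 0 1) := by
    refine antitoneOn_of_hasDerivWithinAt_nonpos (convex_Icc 0 1)
      (fun s _ => (hψ s).continuousAt.continuousWithinAt)
      (fun s _ => (hψ s).hasDerivWithinAt) fun s hs => ?_
    rw [interior_Icc] at hs
    have : ⟪gradient f (x + s • v) - gradient f x, v⟫ ≤ L * s * ‖v‖ ^ 2 :=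
      calc _ ≤ ‖gradient f (x + s • v) - gradient f x‖ * ‖v‖ := real_inner_le_norm _ _
        _ ≤ L * ‖s • v‖ * ‖v‖ := by
          gcongr
          simpa using hsm (x + s • v) x
        _ = L * s * ‖v‖ ^ 2 := by rw [norm_smul, Real.norm_of_nonneg hs.1.le]; ring
    linarith
  have := hanti (left_mem_Icc.2 zero_le_one) (right_mem_Icc.2 zero_le_one) zero_le_one
  simp only [ψ, v, zero_smul, add_zero, one_smul, add_sub_cancel] at this
  linarith

theorem ConvexOn.norm_sub_gradient_sq_le (hconv : ConvexOn ℝ univ f) (hf : Differentiable ℝ f)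
    {L : ℝ} (hL : 0 < L) (hsm : ∀ a b, ‖gradient f a - gradient f b‖ ≤ L * ‖a - b‖)
    (x y : E) :
    ‖gradient f x - gradient f y‖ ^ 2 ≤ 2 * L * (f x - f y - ⟪gradient f y, x - y⟫) := by
  set w := gradient f x - gradient f y
  -- Bound `f (x - L⁻¹ • w)` above by the descent lemma at `x`, below by convexity at `y`.
  have hdesc := le_add_inner_gradient_add_sq_of_lipschitz hf hsm x (x - L⁻¹ • w)
  have hconv' := hconv.add_inner_gradient_le hf (x - L⁻¹ • w) y
  have hw : ⟪gradient f x, w⟫ - ⟪gradient f y, w⟫ = ‖w‖ ^ 2 := by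
    rw [← inner_sub_left, real_inner_self_eq_norm_sq]
  rw [sub_sub_cancel_left, norm_neg, norm_smul, Real.norm_of_nonneg (inv_nonneg.2 hL.le),
    inner_neg_right, real_inner_smul_right] at hdesc
  rw [sub_right_comm, inner_sub_right, real_inner_smul_right] at hconv'
  have key : L⁻¹ / 2 * ‖w‖ ^ 2 ≤ f x - f y - ⟪gradient f y, x - y⟫ := by
    have hsq : L / 2 * (L⁻¹ * ‖w‖) ^ 2 = L⁻¹ / 2 * ‖w‖ ^ 2 := by field_simp
    have hw' := congrArg (L⁻¹ * ·) hw
    simp only [mul_sub] at hw'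
    linarith
  calc ‖w‖ ^ 2 = 2 * L * (L⁻¹ / 2 * ‖w‖ ^ 2) := by field_simp
    _ ≤ _ := by gcongr

end SmoothConvex

theorem norm_sub_sq_le_two_mul {G : Type*} [SeminormedAddCommGroup G] (a b : G) :
    ‖a - b‖ ^ 2 ≤ 2 * (‖a‖ ^ 2 + ‖b‖ ^ 2) :=
  (pow_le_pow_left₀ (norm_nonneg _) (norm_sub_le a b) 2).trans add_sq_le

theorem Finset.sum_apply_update_eq {ι α M : Type*} [Fintype ι] [DecidableEq ι] [AddCommGroup M]
    (φ : ι → α → M) (y : ι → α) (i : ι) (x : α) :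
    ∑ j, φ j (update y i x j) = ∑ j, φ j (y j) - φ i (y i) + φ i x := by
  simp_rw [apply_update φ]
  rw [Finset.sum_update_of_mem (Finset.mem_univ i),
    Finset.sum_eq_add_sum_sdiff_singleton_of_mem (Finset.mem_univ i)]
  abel

section FiniteSum

open Finset

variable {E : Type*} [NormedAddCommGroup E] [InnerProductSpace ℝ E] {ι : Type*} [Fintype ι]

theorem sum_norm_sub_average_sq_le (C : ι → E) :
    ∑ i, ‖C i - (Fintype.card ι : ℝ)⁻¹ • ∑ j, C j‖ ^ 2 ≤ ∑ i, ‖C i‖ ^ 2 := by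
  rcases isEmpty_or_nonempty ι with hι | hι
  · simp
  set m := (Fintype.card ι : ℝ)⁻¹ • ∑ j, C j
  have hsum : ∑ j, C j = (Fintype.card ι : ℝ) • m := by
    rw [smul_inv_smul₀ (Nat.cast_ne_zero.2 Fintype.card_ne_zero)]
  have hexpand : ∑ i, ‖C i - m‖ ^ 2 = ∑ i, ‖C i‖ ^ 2 - Fintype.card ι * ‖m‖ ^ 2 := by
    simp_rw [norm_sub_sq_real, sum_add_distrib, sum_sub_distrib, ← mul_sum, ← sum_inner, hsum,
      real_inner_smul_left, real_inner_self_eq_norm_sq, sum_const, card_univ, nsmul_eq_mul]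
    ring
  rw [hexpand]
  have : 0 ≤ (Fintype.card ι : ℝ) * ‖m‖ ^ 2 := by positivity
  linarith

variable [CompleteSpace E] {f : ι → E → ℝ} {L : ℝ} {xstar : E}

theorem sum_gradient_eq_zero_of_forall_sum_le (hdiff : ∀ i, Differentiable ℝ (f i))
    (hmin : ∀ y, ∑ i, f i xstar ≤ ∑ i, f i y) : ∑ i, gradient (f i) xstar = 0 := by
  have hderiv : HasFDerivAt (fun x => ∑ i, f i x)
      (∑ i, InnerProductSpace.toDual ℝ E (gradient (f i) xstar)) xstar :=
    HasFDerivAt.fun_sum fun i _ => (hdiff i xstar).hasGradientAt.hasFDerivAt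
  have h0 := (IsLocalMin.hasFDerivAt_eq_zero (.of_forall hmin) hderiv)
  rw [← map_sum] at h0
  exact (InnerProductSpace.toDual ℝ E).map_eq_zero_iff.1 h0

variable (hconv : ∀ i, ConvexOn ℝ Set.univ (f i)) (hdiff : ∀ i, Differentiable ℝ (f i))
  (hL : 0 < L) (hsmooth : ∀ i x y, ‖gradient (f i) x - gradient (f i) y‖ ≤ L * ‖x - y‖)
  (hstar : ∑ i, gradient (f i) xstar = 0)
include hconv hdiff hL hsmooth hstar

theorem sum_norm_sub_gradient_sq_le (x : E) :
    ∑ i, ‖gradient (f i) x - gradient (f i) xstar‖ ^ 2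
      ≤ 2 * L * (∑ i, f i x - ∑ i, f i xstar) := by
  have hinner : ∑ i, ⟪gradient (f i) xstar, x - xstar⟫ = 0 := by
    rw [← sum_inner, hstar, inner_zero_left]
  calc _ ≤ ∑ i, 2 * L * (f i x - f i xstar - ⟪gradient (f i) xstar, x - xstar⟫) :=
        sum_le_sum fun i _ => (hconv i).norm_sub_gradient_sq_le (hdiff i) hL (hsmooth i) x xstar
    _ = _ := by rw [← mul_sum, sum_sub_distrib, sum_sub_distrib, hinner, sub_zero]

theorem sum_norm_saga_sq_le (x : E) (y : ι → E) :
    ∑ i, ‖gradient (f i) x - gradient (f i) (y i)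
        + (Fintype.card ι : ℝ)⁻¹ • ∑ j, gradient (f j) (y j)‖ ^ 2
      ≤ 4 * L * (∑ i, f i x - ∑ i, f i xstar)
        + 2 * ∑ j, ‖gradient (f j) (y j) - gradient (f j) xstar‖ ^ 2 := by
  set a := fun i => gradient (f i) x - gradient (f i) xstar
  set c := fun i => gradient (f i) (y i) - gradient (f i) xstar
  have hc : ∑ j, gradient (f j) (y j) = ∑ j, c j := by
    rw [sum_sub_distrib, hstar, sub_zero]
  have hsplit : ∀ i, gradient (f i) x - gradient (f i) (y i)
      + (Fintype.card ι : ℝ)⁻¹ • ∑ j, gradient (f j) (y j)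
      = a i - (c i - (Fintype.card ι : ℝ)⁻¹ • ∑ j, c j) := fun i => by
    rw [hc]; simp only [a, c]; abel
  have ha := sum_norm_sub_gradient_sq_le hconv hdiff hL hsmooth hstar x
  have hvar := sum_norm_sub_average_sq_le c
  calc _ ≤ ∑ i, 2 * (‖a i‖ ^ 2 + ‖c i - (Fintype.card ι : ℝ)⁻¹ • ∑ j, c j‖ ^ 2) :=
        sum_le_sum fun i _ => (hsplit i).symm ▸ norm_sub_sq_le_two_mul _ _
    _ ≤ _ := by rw [← mul_sum, sum_add_distrib]; linarith

theorem sum_sum_norm_update_sq_le [DecidableEq ι] (x : E) (y : ι → E) :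
    ∑ i, ∑ j, ‖gradient (f j) (update y i x j) - gradient (f j) xstar‖ ^ 2
      ≤ (Fintype.card ι - 1) * ∑ j, ‖gradient (f j) (y j) - gradient (f j) xstar‖ ^ 2
        + 2 * L * (∑ i, f i x - ∑ i, f i xstar) := by
  have ha := sum_norm_sub_gradient_sq_le hconv hdiff hL hsmooth hstar x
  have hb : 0 ≤ ∑ j, ‖gradient (f j) (y j) - gradient (f j) xstar‖ ^ 2 := by positivity
  simp_rw [sum_apply_update_eq (fun j z => ‖gradient (f j) z - gradient (f j) xstar‖ ^ 2),
    sum_add_distrib, sum_sub_distrib, sum_const, card_univ, nsmul_eq_mul]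
  linarith

end FiniteSum

theorem Fintype.card_mul_sum_eq_sum_sum_of_update_eq {ι α : Type*} [Fintype ι] [DecidableEq ι]
    [Fintype α] (k : ι) (H : (ι → α) → α → ℝ) (hH : ∀ ω a, H (update ω k a) = H ω) :
    Fintype.card α * ∑ ω, H ω (ω k) = ∑ ω, ∑ a, H ω a := by
  set e := Equiv.funSplitAt k α
  have hk : ∀ a r, e.symm (a, r) k = a := by simp [e]
  have hfiber : ∀ a b r, H (e.symm (a, r)) = H (e.symm (b, r)) := by
    intro a b r
    rw [← hH (e.symm (b, r)) a]
    congr 1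
    funext j
    by_cases h : j = k
    · subst h; simp [e]
    · simp [e, h]
  rw [← e.symm.sum_comp, ← e.symm.sum_comp, Fintype.sum_prod_type, Fintype.sum_prod_type]
  simp_rw [hk]
  calc _ = ∑ b : α, ∑ a, ∑ r, H (e.symm (a, r)) a := by
        rw [Finset.sum_const, Finset.card_univ, nsmul_eq_mul]
    _ = ∑ b : α, ∑ r, ∑ a, H (e.symm (b, r)) a := by
        refine Finset.sum_congr rfl fun b _ => ?_
        rw [Finset.sum_comm]
        exact Finset.sum_congr rfl fun r _ => Finset.sum_congr rfl fun a _ => by rw [hfiber a b r]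

theorem Finset.sum_range_le_of_mul_succ_le {a b : ℕ → ℝ} {c : ℝ} {T : ℕ} (hc : 0 ≤ c)
    (haT : 0 ≤ a T) (h : ∀ s < T, c * a (s + 1) ≤ (c - 1) * a s + b s) :
    ∑ s ∈ range T, a s ≤ c * a 0 + ∑ s ∈ range T, b s := by
  have hsum : c * ∑ s ∈ range T, a (s + 1)
      ≤ (c - 1) * ∑ s ∈ range T, a s + ∑ s ∈ range T, b s := by
    rw [mul_sum, mul_sum, ← sum_add_distrib]
    exact sum_le_sum fun s hs => h s (mem_range.1 hs)
  have hshift : ∑ s ∈ range T, a (s + 1) = ∑ s ∈ range T, a s + a T - a 0 := by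
    have := sum_range_succ' a T
    rw [sum_range_succ] at this
    linarith
  rw [hshift] at hsum
  nlinarith [mul_nonneg hc haT]

theorem Finset.sum_Icc_one_eq_sum_range {M : Type*} [AddCommMonoid M] (g : ℕ → M) (T : ℕ) :
    ∑ t ∈ Icc 1 T, g t = ∑ s ∈ range T, g (s + 1) := by
  rw [range_eq_Ico, sum_Ico_add' g 0 T 1, zero_add, Ico_add_one_right_eq_Icc]

section AdaLVRSaga

open Finset

variable {n d : ℕ} (f : Fin n → EuclideanSpace ℝ (Fin d) → ℝ)
  (proj : EuclideanSpace ℝ (Fin d) → EuclideanSpace ℝ (Fin d)) (η : ℝ)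
  (x1 : EuclideanSpace ℝ (Fin d))

theorem adaLVRstate_congr {idx idx' : ℕ → Fin n} {t : ℕ}
    (h : ∀ u ∈ Icc 1 t, idx u = idx' u) :
    adaLVRstate n d f proj η x1 idx t = adaLVRstate n d f proj η x1 idx' t := by
  induction t with
  | zero => rfl
  | succ t ih =>
    have hprev := ih fun u hu => h u (Icc_subset_Icc_right t.le_succ hu)
    have hlast := h (t + 1) (by simp)
    simp only [adaLVRstate, hprev, hlast]

theorem extIdx_succ {T : ℕ} (hT : 0 < T) (ω : Fin T → Fin n) {s : ℕ} (hs : s < T) :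
    extIdx T hT ω (s + 1) = ω ⟨s, hs⟩ := by
  simp [extIdx, Nat.mod_eq_of_lt hs]

theorem adaLVRstate_extIdx_update {T : ℕ} (hT : 0 < T) (ω : Fin T → Fin n) {s : ℕ}
    (hs : s < T) (j : Fin n) :
    adaLVRstate n d f proj η x1 (extIdx T hT (update ω ⟨s, hs⟩ j)) s
      = adaLVRstate n d f proj η x1 (extIdx T hT ω) s := by
  refine adaLVRstate_congr f proj η x1 fun u hu => ?_
  obtain ⟨hu1, hus⟩ := mem_Icc.1 hu
  obtain ⟨u, rfl⟩ := Nat.exists_eq_add_of_le' hu1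
  rw [extIdx_succ hT _ (by omega), extIdx_succ hT _ (by omega)]
  exact update_of_ne (by simp [Fin.ext_iff]; omega) _ _

variable {T : ℕ} (hT : 0 < T) (xstar : EuclideanSpace ℝ (Fin d))

-- Sums over all index sequences `ω`, i.e. `n ^ T` times expectations, at step `s + 1`: they
-- involve `x^(s+1)`, `ỹ^(s)` and `g^(s+1)`.
noncomputable def gapSum (s : ℕ) : ℝ :=
  ∑ ω : Fin T → Fin n,
    (∑ i, f i (adaLVRstate n d f proj η x1 (extIdx T hT ω) s).1 - ∑ i, f i xstar)

noncomputable def memorySum (s : ℕ) : ℝ :=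
  ∑ ω : Fin T → Fin n, ∑ j,
    ‖gradient (f j) ((adaLVRstate n d f proj η x1 (extIdx T hT ω) s).2.1 j)
      - gradient (f j) xstar‖ ^ 2

noncomputable def gradSqSum (s : ℕ) : ℝ :=
  ∑ ω : Fin T → Fin n, ‖adaLVRg n d f proj η x1 (extIdx T hT ω) (s + 1)‖ ^ 2

theorem memorySum_zero :
    memorySum f proj η x1 hT xstar 0
      = n ^ T * ∑ j, ‖gradient (f j) x1 - gradient (f j) xstar‖ ^ 2 := by
  simp [memorySum, adaLVRstate, sum_const, card_univ]

variable {f xstar} {L : ℝ} (hconv : ∀ i, ConvexOn ℝ Set.univ (f i))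
  (hdiff : ∀ i, Differentiable ℝ (f i)) (hL : 0 < L)
  (hsmooth : ∀ i x y, ‖gradient (f i) x - gradient (f i) y‖ ≤ L * ‖x - y‖)
  (hstar : ∑ i, gradient (f i) xstar = 0)
include hconv hdiff hL hsmooth hstar

theorem card_mul_gradSqSum_le {s : ℕ} (hs : s < T) :
    n * gradSqSum f proj η x1 hT s
      ≤ 4 * L * gapSum f proj η x1 hT xstar s + 2 * memorySum f proj η x1 hT xstar s := by
  set st := fun ω : Fin T → Fin n => adaLVRstate n d f proj η x1 (extIdx T hT ω) s
  set H := fun (ω : Fin T → Fin n) (i : Fin n) => ‖gradient (f i) (st ω).1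
    - gradient (f i) ((st ω).2.1 i) + (n : ℝ)⁻¹ • ∑ j, gradient (f j) ((st ω).2.1 j)‖ ^ 2
  have hH : ∀ ω j, H (update ω ⟨s, hs⟩ j) = H ω := fun ω j => by
    simp only [H, st, adaLVRstate_extIdx_update f proj η x1 hT ω hs j]
  have hgrad : gradSqSum f proj η x1 hT s = ∑ ω, H ω (ω ⟨s, hs⟩) := by
    simp only [gradSqSum, adaLVRg, Nat.add_sub_cancel, extIdx_succ hT _ hs, H, st]
  have hsaga := fun ω => sum_norm_saga_sq_le hconv hdiff hL hsmooth hstar (st ω).1 (st ω).2.1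
  simp only [Fintype.card_fin] at hsaga
  have havg := Fintype.card_mul_sum_eq_sum_sum_of_update_eq _ H hH
  rw [Fintype.card_fin] at havg
  rw [hgrad, havg, gapSum, memorySum, mul_sum, mul_sum, ← sum_add_distrib]
  exact sum_le_sum fun ω _ => hsaga ω

theorem card_mul_memorySum_succ_le {s : ℕ} (hs : s < T) :
    n * memorySum f proj η x1 hT xstar (s + 1)
      ≤ (n - 1) * memorySum f proj η x1 hT xstar s + 2 * L * gapSum f proj η x1 hT xstar s := by
  set st := fun ω : Fin T → Fin n => adaLVRstate n d f proj η x1 (extIdx T hT ω) s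
  set H := fun (ω : Fin T → Fin n) (i : Fin n) =>
    ∑ j, ‖gradient (f j) (update (st ω).2.1 i (st ω).1 j) - gradient (f j) xstar‖ ^ 2
  have hH : ∀ ω j, H (update ω ⟨s, hs⟩ j) = H ω := fun ω j => by
    simp only [H, st, adaLVRstate_extIdx_update f proj η x1 hT ω hs j]
  have hmem : memorySum f proj η x1 hT xstar (s + 1) = ∑ ω, H ω (ω ⟨s, hs⟩) := by
    simp only [memorySum, adaLVRstate, extIdx_succ hT _ hs, H, st]
  have hupd := fun ω =>
    sum_sum_norm_update_sq_le hconv hdiff hL hsmooth hstar (st ω).1 (st ω).2.1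
  simp only [Fintype.card_fin] at hupd
  have havg := Fintype.card_mul_sum_eq_sum_sum_of_update_eq _ H hH
  rw [Fintype.card_fin] at havg
  rw [hmem, havg, gapSum, memorySum, mul_sum, mul_sum, ← sum_add_distrib]
  exact sum_le_sum fun ω _ => hupd ω

theorem card_mul_sum_gradSqSum_le :
    n * ∑ s ∈ range T, gradSqSum f proj η x1 hT s
      ≤ 8 * L * ∑ s ∈ range T, gapSum f proj η x1 hT xstar s
        + 4 * L * n * n ^ T * (∑ i, f i x1 - ∑ i, f i xstar) := by
  have hgrad : n * ∑ s ∈ range T, gradSqSum f proj η x1 hT s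
      ≤ 4 * L * ∑ s ∈ range T, gapSum f proj η x1 hT xstar s
        + 2 * ∑ s ∈ range T, memorySum f proj η x1 hT xstar s := by
    rw [mul_sum, mul_sum, mul_sum, ← sum_add_distrib]
    exact sum_le_sum fun s hs =>
      card_mul_gradSqSum_le proj η x1 hT hconv hdiff hL hsmooth hstar (mem_range.1 hs)
  have hmem := sum_range_le_of_mul_succ_le (b := fun s => 2 * L * gapSum f proj η x1 hT xstar s)
    n.cast_nonneg (by unfold memorySum; positivity) fun s hs =>
      card_mul_memorySum_succ_le proj η x1 hT hconv hdiff hL hsmooth hstar hs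
  have hinit := mul_le_mul_of_nonneg_left
    (sum_norm_sub_gradient_sq_le hconv hdiff hL hsmooth hstar x1)
    (by positivity : (0 : ℝ) ≤ n * n ^ T)
  rw [memorySum_zero, ← mul_sum] at hmem
  linarith

end AdaLVRSaga

theorem stmt_18_general (n d T : ℕ) (hn : 1 ≤ n) (hT : 0 < T)
    (L η : ℝ) (hL : 0 < L)
    (f : Fin n → EuclideanSpace ℝ (Fin d) → ℝ)
    (hconv : ∀ i, ConvexOn ℝ Set.univ (f i))
    (hdiff : ∀ i, Differentiable ℝ (f i))
    (hsmooth : ∀ i x y, ‖gradient (f i) x - gradient (f i) y‖ ≤ L * ‖x - y‖)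
    (F : EuclideanSpace ℝ (Fin d) → ℝ)
    (hF : F = fun x => (n : ℝ)⁻¹ * ∑ i, f i x)
    (xstar : EuclideanSpace ℝ (Fin d))
    (hmin : ∀ y, F xstar ≤ F y)
    (proj : EuclideanSpace ℝ (Fin d) → EuclideanSpace ℝ (Fin d))
    (x1 : EuclideanSpace ℝ (Fin d)) :
    (∑ ω : Fin T → Fin n, ∑ t ∈ Finset.Icc 1 T,
        ‖adaLVRg n d f proj η x1 (extIdx T hT ω) t‖ ^ 2) / (n : ℝ) ^ T
      ≤ 8 * L * ∑ t ∈ Finset.Icc 1 T,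
          (∑ ω : Fin T → Fin n,
            (F (adaLVRx n d f proj η x1 (extIdx T hT ω) t) - F xstar)) / (n : ℝ) ^ T
        + 4 * L * n * (F x1 - F xstar) := by
  have hn0 : (0 : ℝ) < n := by exact_mod_cast hn
  have hsum : ∀ x, ∑ i, f i x - ∑ i, f i xstar = n * (F x - F xstar) := fun x => by
    subst hF; field_simp
  have hstar : ∑ i, gradient (f i) xstar = 0 :=
    sum_gradient_eq_zero_of_forall_sum_le hdiff fun y => by
      rw [← sub_nonneg, hsum]
      exact mul_nonneg hn0.le (sub_nonneg.2 (hmin y))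
  have hgap : ∀ s, ∑ ω : Fin T → Fin n,
      (F (adaLVRx n d f proj η x1 (extIdx T hT ω) (s + 1)) - F xstar)
        = (n : ℝ)⁻¹ * gapSum f proj η x1 hT xstar s := fun s => by
    simp only [gapSum, hsum, ← Finset.mul_sum, adaLVRx, Nat.add_sub_cancel]
    field_simp
  have key := card_mul_sum_gradSqSum_le proj η x1 hT hconv hdiff hL hsmooth hstar
  rw [hsum x1] at key
  rw [Finset.sum_comm, ← Finset.sum_div, Finset.sum_Icc_one_eq_sum_range,
    Finset.sum_Icc_one_eq_sum_range]
  simp only [hgap, ← Finset.mul_sum]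
  change (∑ s ∈ Finset.range T, gradSqSum f proj η x1 hT s) / _ ≤ _
  rw [div_le_iff₀ (by positivity)]
  field_simp
  linarith

theorem stmt_18 (n d T : ℕ) (hn : 1 ≤ n) (hd : 1 ≤ d) (hT : 0 < T)
    (L η D : ℝ) (hL : 0 < L) (hη : 0 < η)
    (f : Fin n → EuclideanSpace ℝ (Fin d) → ℝ)
    (hconv : ∀ i, ConvexOn ℝ Set.univ (f i))
    (hdiff : ∀ i, Differentiable ℝ (f i))
    (hsmooth : ∀ i x y, ‖gradient (f i) x - gradient (f i) y‖ ≤ L * ‖x - y‖)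
    (F : EuclideanSpace ℝ (Fin d) → ℝ)
    (hF : F = fun x => (n : ℝ)⁻¹ * ∑ i, f i x)
    (X : Set (EuclideanSpace ℝ (Fin d))) (hXne : X.Nonempty)
    (hXcomp : IsCompact X) (hXconv : Convex ℝ X)
    (hdiam : ∀ x ∈ X, ∀ y ∈ X, ‖x - y‖ ≤ D)
    (xstar : EuclideanSpace ℝ (Fin d)) (hxstar : xstar ∈ X)
    (hmin : ∀ y, F xstar ≤ F y)
    (proj : EuclideanSpace ℝ (Fin d) → EuclideanSpace ℝ (Fin d))
    (hproj : ∀ z, proj z ∈ X ∧ ∀ y ∈ X, ‖proj z - z‖ ≤ ‖y - z‖)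
    (x1 : EuclideanSpace ℝ (Fin d)) (hx1 : x1 ∈ X) :
    (∑ ω : Fin T → Fin n, ∑ t ∈ Finset.Icc 1 T,
        ‖adaLVRg n d f proj η x1 (extIdx T hT ω) t‖ ^ 2) / (n : ℝ) ^ T
      ≤ 8 * L * ∑ t ∈ Finset.Icc 1 T,
          (∑ ω : Fin T → Fin n,
            (F (adaLVRx n d f proj η x1 (extIdx T hT ω) t) - F xstar)) / (n : ℝ) ^ T
        + 4 * L * n * (F x1 - F xstar) :=
  stmt_18_general n d T hn hT L η hL f hconv hdiff hsmooth F hF xstar hmin proj x1
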